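/- In the Morita context T = (Z_6, 2Z_6, 3Z_6, Z_6) with context products given by multiplication in Z_6, one has VW = 0 and WV = 0, and the ideal H = (3Z_6, 2Z_6, 3Z_6, 2Z_6) of T satisfies that 3Z_6 and 2Z_6 are prime ideals of Z_6 with V_1 = {v ∈ V : vW ⊆ I} = {v ∈ V : Wv ⊆ J} and W_1 = {w ∈ W : Vw ⊆ I} = {w ∈ W : wV ⊆ J}, but H is not a prime ideal of T. -/

import Mathlib

/-- A Morita context `(R,V,W,S)`: rings `R`, `S`, an `(R,S)`-bimodule `V`,
an `(S,R)`-bimodule `W`, and context products `V × W → R`, `W × V → S`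
making the `2 × 2` matrix set an associative ring. -/
structure MoritaContext (R S V W : Type*) [Ring R] [Ring S]
    [AddCommGroup V] [AddCommGroup W] : Type _ where
  smulRV : R → V → V
  smulVS : V → S → V
  smulSW : S → W → W
  smulWR : W → R → W
  mulVW : V → W → R
  mulWV : W → V → S
  smulRV_add : ∀ r v v', smulRV r (v + v') = smulRV r v + smulRV r v'
  add_smulRV : ∀ r r' v, smulRV (r + r') v = smulRV r v + smulRV r' v
  mul_smulRV : ∀ r r' v, smulRV (r * r') v = smulRV r (smulRV r' v)
  one_smulRV : ∀ v, smulRV 1 v = v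
  smulVS_add : ∀ v v' s, smulVS (v + v') s = smulVS v s + smulVS v' s
  add_smulVS : ∀ v s s', smulVS v (s + s') = smulVS v s + smulVS v s'
  mul_smulVS : ∀ v s s', smulVS v (s * s') = smulVS (smulVS v s) s'
  one_smulVS : ∀ v, smulVS v 1 = v
  smul_assocRVS : ∀ r v s, smulVS (smulRV r v) s = smulRV r (smulVS v s)
  smulSW_add : ∀ s w w', smulSW s (w + w') = smulSW s w + smulSW s w'
  add_smulSW : ∀ s s' w, smulSW (s + s') w = smulSW s w + smulSW s' w
  mul_smulSW : ∀ s s' w, smulSW (s * s') w = smulSW s (smulSW s' w)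
  one_smulSW : ∀ w, smulSW 1 w = w
  smulWR_add : ∀ w w' r, smulWR (w + w') r = smulWR w r + smulWR w' r
  add_smulWR : ∀ w r r', smulWR w (r + r') = smulWR w r + smulWR w r'
  mul_smulWR : ∀ w r r', smulWR w (r * r') = smulWR (smulWR w r) r'
  one_smulWR : ∀ w, smulWR w 1 = w
  smul_assocSWR : ∀ s w r, smulWR (smulSW s w) r = smulSW s (smulWR w r)
  mulVW_add_left : ∀ v v' w, mulVW (v + v') w = mulVW v w + mulVW v' w
  mulVW_add_right : ∀ v w w', mulVW v (w + w') = mulVW v w + mulVW v w'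
  mulWV_add_left : ∀ w w' v, mulWV (w + w') v = mulWV w v + mulWV w' v
  mulWV_add_right : ∀ w v v', mulWV w (v + v') = mulWV w v + mulWV w v'
  mulVW_smulR : ∀ r v w, mulVW (smulRV r v) w = r * mulVW v w
  mulVW_smulS : ∀ v s w, mulVW (smulVS v s) w = mulVW v (smulSW s w)
  mulVW_smulWR : ∀ v w r, mulVW v (smulWR w r) = mulVW v w * r
  mulWV_smulS : ∀ s w v, mulWV (smulSW s w) v = s * mulWV w v
  mulWV_smulR : ∀ w r v, mulWV (smulWR w r) v = mulWV w (smulRV r v)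
  mulWV_smulVS : ∀ w v s, mulWV w (smulVS v s) = mulWV w v * s
  assocVWV : ∀ v w v', smulRV (mulVW v w) v' = smulVS v (mulWV w v')
  assocWVW : ∀ w v w', smulSW (mulWV w v) w' = smulWR w (mulVW v w')

namespace MoritaContext

variable {R S V W : Type*} [Ring R] [Ring S] [AddCommGroup V] [AddCommGroup W]
variable (M : MoritaContext R S V W)

/-- The underlying set of the Morita context ring: matrices `((r,v),(w,s))`. -/
def Mat (_ : MoritaContext R S V W) : Type _ := (R × V) × (W × S)

instance : AddCommGroup M.Mat := inferInstanceAs (AddCommGroup ((R × V) × (W × S)))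


@[simp] lemma add_fst_fst (a b : M.Mat) : (a + b).1.1 = a.1.1 + b.1.1 := rfl
@[simp] lemma add_fst_snd (a b : M.Mat) : (a + b).1.2 = a.1.2 + b.1.2 := rfl
@[simp] lemma add_snd_fst (a b : M.Mat) : (a + b).2.1 = a.2.1 + b.2.1 := rfl
@[simp] lemma add_snd_snd (a b : M.Mat) : (a + b).2.2 = a.2.2 + b.2.2 := rfl
@[simp] lemma neg_fst_fst (a : M.Mat) : (-a).1.1 = -a.1.1 := rfl
@[simp] lemma neg_fst_snd (a : M.Mat) : (-a).1.2 = -a.1.2 := rfl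
@[simp] lemma neg_snd_fst (a : M.Mat) : (-a).2.1 = -a.2.1 := rfl
@[simp] lemma neg_snd_snd (a : M.Mat) : (-a).2.2 = -a.2.2 := rfl
@[simp] lemma zero_fst_fst : (0 : M.Mat).1.1 = 0 := rfl
@[simp] lemma zero_fst_snd : (0 : M.Mat).1.2 = 0 := rfl
@[simp] lemma zero_snd_fst : (0 : M.Mat).2.1 = 0 := rfl
@[simp] lemma zero_snd_snd : (0 : M.Mat).2.2 = 0 := rfl

/-- The matrix `((r,v),(w,s))` as an element of the Morita context ring. -/
def mat (r : R) (v : V) (w : W) (s : S) : M.Mat := ((r, v), (w, s))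

lemma smulRV_zero (r : R) : M.smulRV r 0 = 0 := by
  have h := M.smulRV_add r 0 0
  rw [add_zero] at h
  exact (add_eq_left.mp h.symm)

lemma zero_smulRV (v : V) : M.smulRV 0 v = 0 := by
  have h := M.add_smulRV 0 0 v
  rw [add_zero] at h
  exact (add_eq_left.mp h.symm)

lemma smulVS_zero (v : V) : M.smulVS v 0 = 0 := by
  have h := M.add_smulVS v 0 0
  rw [add_zero] at h
  exact (add_eq_left.mp h.symm)

lemma zero_smulVS (s : S) : M.smulVS 0 s = 0 := by
  have h := M.smulVS_add 0 0 s
  rw [add_zero] at h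
  exact (add_eq_left.mp h.symm)

lemma smulSW_zero (s : S) : M.smulSW s 0 = 0 := by
  have h := M.smulSW_add s 0 0
  rw [add_zero] at h
  exact (add_eq_left.mp h.symm)

lemma zero_smulSW (w : W) : M.smulSW 0 w = 0 := by
  have h := M.add_smulSW 0 0 w
  rw [add_zero] at h
  exact (add_eq_left.mp h.symm)

lemma smulWR_zero (w : W) : M.smulWR w 0 = 0 := by
  have h := M.add_smulWR w 0 0
  rw [add_zero] at h
  exact (add_eq_left.mp h.symm)

lemma zero_smulWR (r : R) : M.smulWR 0 r = 0 := by
  have h := M.smulWR_add 0 0 r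
  rw [add_zero] at h
  exact (add_eq_left.mp h.symm)

lemma mulVW_zero (v : V) : M.mulVW v 0 = 0 := by
  have h := M.mulVW_add_right v 0 0
  rw [add_zero] at h
  exact (add_eq_left.mp h.symm)

lemma zero_mulVW (w : W) : M.mulVW 0 w = 0 := by
  have h := M.mulVW_add_left 0 0 w
  rw [add_zero] at h
  exact (add_eq_left.mp h.symm)

lemma mulWV_zero (w : W) : M.mulWV w 0 = 0 := by
  have h := M.mulWV_add_right w 0 0
  rw [add_zero] at h
  exact (add_eq_left.mp h.symm)

lemma zero_mulWV (v : V) : M.mulWV 0 v = 0 := by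
  have h := M.mulWV_add_left 0 0 v
  rw [add_zero] at h
  exact (add_eq_left.mp h.symm)


lemma mat_ext {a b : M.Mat} (h1 : a.1.1 = b.1.1) (h2 : a.1.2 = b.1.2)
    (h3 : a.2.1 = b.2.1) (h4 : a.2.2 = b.2.2) : a = b :=
  Prod.ext (Prod.ext h1 h2) (Prod.ext h3 h4)

/-- Multiplication in the Morita context ring. -/
def matMul (a b : M.Mat) : M.Mat :=
  ((a.1.1 * b.1.1 + M.mulVW a.1.2 b.2.1, M.smulRV a.1.1 b.1.2 + M.smulVS a.1.2 b.2.2),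
   (M.smulWR a.2.1 b.1.1 + M.smulSW a.2.2 b.2.1, M.mulWV a.2.1 b.1.2 + a.2.2 * b.2.2))

/-- The ring structure on the Morita context matrices. -/
instance : Ring M.Mat where
  __ := (inferInstanceAs (AddCommGroup ((R × V) × (W × S))) : AddCommGroup ((R × V) × (W × S)))
  mul := M.matMul
  one := ((1, 0), (0, 1))
  left_distrib a b c := by
    show M.matMul a (b + c) = M.matMul a b + M.matMul a c
    refine M.mat_ext ?_ ?_ ?_ ?_ <;> simp only [M.add_fst_fst, M.add_fst_snd, M.add_snd_fst, M.add_snd_snd] <;>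
      simp [matMul, M.smulRV_add, M.add_smulVS, M.smulSW_add, M.add_smulWR,
        M.mulVW_add_right, M.mulWV_add_right, mul_add] <;> abel
  right_distrib a b c := by
    show M.matMul (a + b) c = M.matMul a c + M.matMul b c
    refine M.mat_ext ?_ ?_ ?_ ?_ <;> simp only [M.add_fst_fst, M.add_fst_snd, M.add_snd_fst, M.add_snd_snd] <;>
      simp [matMul, M.add_smulRV, M.smulVS_add, M.add_smulSW, M.smulWR_add,
        M.mulVW_add_left, M.mulWV_add_left, add_mul] <;> abel
  zero_mul a := by
    show M.matMul 0 a = 0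
    refine M.mat_ext ?_ ?_ ?_ ?_ <;> simp [matMul, M.zero_smulRV, M.zero_smulVS, M.zero_smulSW, M.zero_smulWR,
      M.zero_mulVW, M.zero_mulWV]
  mul_zero a := by
    show M.matMul a 0 = 0
    refine M.mat_ext ?_ ?_ ?_ ?_ <;> simp [matMul, M.smulRV_zero, M.smulVS_zero, M.smulSW_zero, M.smulWR_zero,
      M.mulVW_zero, M.mulWV_zero]
  mul_assoc a b c := by
    show M.matMul (M.matMul a b) c = M.matMul a (M.matMul b c)
    refine M.mat_ext ?_ ?_ ?_ ?_ <;>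
      simp [matMul, M.smulRV_add, M.add_smulRV, M.mul_smulRV, M.smulVS_add, M.add_smulVS,
        M.mul_smulVS, M.smul_assocRVS, M.smulSW_add, M.add_smulSW, M.mul_smulSW,
        M.smulWR_add, M.add_smulWR, M.mul_smulWR, M.smul_assocSWR,
        M.mulVW_add_left, M.mulVW_add_right, M.mulWV_add_left, M.mulWV_add_right,
        M.mulVW_smulR, M.mulVW_smulS, M.mulVW_smulWR, M.mulWV_smulS, M.mulWV_smulR,
        M.mulWV_smulVS, M.assocVWV, M.assocWVW, mul_add, add_mul, mul_assoc] <;> abel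
  one_mul a := by
    show M.matMul ((1, 0), (0, 1)) a = a
    refine M.mat_ext ?_ ?_ ?_ ?_ <;> simp [matMul, M.one_smulRV, M.one_smulSW, M.zero_smulVS, M.zero_smulWR,
      M.zero_mulVW, M.zero_mulWV]
  mul_one a := by
    show M.matMul a ((1, 0), (0, 1)) = a
    refine M.mat_ext ?_ ?_ ?_ ?_ <;> simp [matMul, M.one_smulVS, M.one_smulWR, M.smulRV_zero, M.smulSW_zero,
      M.mulVW_zero, M.mulWV_zero]

/-- The "rectangular" subset `(I, V₁, W₁, J)` of the Morita context ring. -/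
def rect (I : Set R) (V₁ : Set V) (W₁ : Set W) (J : Set S) : Set M.Mat :=
  {t | t.1.1 ∈ I ∧ t.1.2 ∈ V₁ ∧ t.2.1 ∈ W₁ ∧ t.2.2 ∈ J}

end MoritaContext

/-- A subset of a ring is a right ideal. -/
def IsRightIdealSet {A : Type*} [Ring A] (U : Set A) : Prop :=
  (0 : A) ∈ U ∧ (∀ a ∈ U, ∀ b ∈ U, a + b ∈ U) ∧ (∀ a ∈ U, -a ∈ U) ∧
    ∀ a ∈ U, ∀ t : A, a * t ∈ U

/-- A subset of a ring is a two-sided ideal. -/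
def IsIdealSet {A : Type*} [Ring A] (U : Set A) : Prop :=
  (0 : A) ∈ U ∧ (∀ a ∈ U, ∀ b ∈ U, a + b ∈ U) ∧ (∀ a ∈ U, -a ∈ U) ∧
    (∀ a ∈ U, ∀ t : A, a * t ∈ U) ∧ ∀ a ∈ U, ∀ t : A, t * a ∈ U

/-- A proper two-sided ideal `U` is prime if `aAb ⊆ U` implies `a ∈ U` or `b ∈ U`. -/
def IsPrimeIdealSet {A : Type*} [Ring A] (U : Set A) : Prop :=
  IsIdealSet U ∧ U ≠ Set.univ ∧ ∀ a b : A, (∀ x : A, a * x * b ∈ U) → a ∈ U ∨ b ∈ U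

/-- A proper two-sided ideal `U` is semiprime if `aAa ⊆ U` implies `a ∈ U`. -/
def IsSemiprimeIdealSet {A : Type*} [Ring A] (U : Set A) : Prop :=
  IsIdealSet U ∧ U ≠ Set.univ ∧ ∀ a : A, (∀ x : A, a * x * a ∈ U) → a ∈ U

/-- A proper right ideal `U` is prime if `aAb ⊆ U` implies `a ∈ U` or `b ∈ U`. -/
def IsPrimeRightIdealSet {A : Type*} [Ring A] (U : Set A) : Prop :=
  IsRightIdealSet U ∧ U ≠ Set.univ ∧ ∀ a b : A, (∀ x : A, a * x * b ∈ U) → a ∈ U ∨ b ∈ U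

/-- The prime radical of a ring: the intersection of all its prime ideals. -/
def primeRadicalSet (A : Type*) [Ring A] : Set A := ⋂₀ {U | IsPrimeIdealSet U}

/-- A ring `A` is prime if `aAb = 0` implies `a = 0` or `b = 0`. -/
def IsPrimeRing (A : Type*) [Ring A] : Prop :=
  ∀ a b : A, (∀ x : A, a * x * b = 0) → a = 0 ∨ b = 0

/-- A ring `A` is semiprime if `aAa = 0` implies `a = 0`. -/
def IsSemiprimeRing (A : Type*) [Ring A] : Prop :=
  ∀ a : A, (∀ x : A, a * x * a = 0) → a = 0

/-- The Morita context `(A,A,A,A)` over a commutative ring with all products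
given by multiplication in `A`. -/
def MoritaContext.ofComm (A : Type*) [CommRing A] : MoritaContext A A A A := by
  refine ⟨(· * ·), (· * ·), (· * ·), (· * ·), (· * ·), (· * ·), ?_, ?_, ?_, ?_, ?_, ?_, ?_, ?_, ?_, ?_, ?_, ?_, ?_, ?_, ?_, ?_, ?_, ?_, ?_, ?_, ?_, ?_, ?_, ?_, ?_, ?_, ?_, ?_, ?_, ?_⟩ <;>
    intros <;> ring

/-- The Morita context `(A, I, J, A)` over a commutative ring `A` with ideals
`I`, `J`, all products given by multiplication in `A`. -/
def MoritaContext.ofIdeals (A : Type*) [CommRing A] (I J : Ideal A) :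
    MoritaContext A A I J := by
  refine ⟨fun r v => ⟨r * v.1, I.mul_mem_left r v.2⟩,
    fun v s => ⟨v.1 * s, I.mul_mem_right s v.2⟩,
    fun s w => ⟨s * w.1, J.mul_mem_left s w.2⟩,
    fun w r => ⟨w.1 * r, J.mul_mem_right r w.2⟩,
    fun v w => v.1 * w.1, fun w v => w.1 * v.1, ?_, ?_, ?_, ?_, ?_, ?_, ?_, ?_, ?_, ?_, ?_, ?_, ?_, ?_, ?_, ?_, ?_, ?_, ?_, ?_, ?_, ?_, ?_, ?_, ?_, ?_, ?_, ?_, ?_, ?_⟩ <;>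
    intros <;> first
      | (apply Subtype.ext; push_cast; ring)
      | (push_cast; ring)

/-- The Morita context `(ℤ₆, 2ℤ₆, 3ℤ₆, ℤ₆)`. -/
noncomputable def M6 : MoritaContext (ZMod 6) (ZMod 6)
    (Ideal.span {(2 : ZMod 6)}) (Ideal.span {(3 : ZMod 6)}) :=
  MoritaContext.ofIdeals (ZMod 6) (Ideal.span {(2 : ZMod 6)}) (Ideal.span {(3 : ZMod 6)})

/-- The ideal `H = (3ℤ₆, 2ℤ₆, 3ℤ₆, 2ℤ₆)` of `M6`. -/
noncomputable def H6 : Set M6.Mat :=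
  M6.rect ((Ideal.span {(3 : ZMod 6)} : Ideal (ZMod 6)) : Set (ZMod 6)) Set.univ Set.univ
    ((Ideal.span {(2 : ZMod 6)} : Ideal (ZMod 6)) : Set (ZMod 6))

namespace MoritaContext

variable {R S V W : Type*} [Ring R] [Ring S] [AddCommGroup V] [AddCommGroup W]
  (M : MoritaContext R S V W)

lemma mul_fst_fst (a b : M.Mat) : (a * b).1.1 = a.1.1 * b.1.1 + M.mulVW a.1.2 b.2.1 := rfl

lemma mul_snd_snd (a b : M.Mat) : (a * b).2.2 = M.mulWV a.2.1 b.1.2 + a.2.2 * b.2.2 := rfl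

/-- With both context products zero, the diagonal of a product is the product of the diagonals. -/
theorem isIdealSet_rect_univ {I : Set R} {J : Set S} (hI : IsIdealSet I) (hJ : IsIdealSet J)
    (hVW : ∀ v w, M.mulVW v w = 0) (hWV : ∀ w v, M.mulWV w v = 0) :
    IsIdealSet (M.rect I Set.univ Set.univ J) := by
  obtain ⟨hI0, hIadd, hIneg, hImul, hImul'⟩ := hI
  obtain ⟨hJ0, hJadd, hJneg, hJmul, hJmul'⟩ := hJ
  refine ⟨⟨hI0, trivial, trivial, hJ0⟩, ?_, ?_, ?_, ?_⟩
  · rintro a ⟨ha₁, -, -, ha₄⟩ b ⟨hb₁, -, -, hb₄⟩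
    exact ⟨hIadd _ ha₁ _ hb₁, trivial, trivial, hJadd _ ha₄ _ hb₄⟩
  · rintro a ⟨ha₁, -, -, ha₄⟩
    exact ⟨hIneg _ ha₁, trivial, trivial, hJneg _ ha₄⟩
  · rintro a ⟨ha₁, -, -, ha₄⟩ t
    refine ⟨?_, trivial, trivial, ?_⟩
    · rw [mul_fst_fst, hVW, add_zero]
      exact hImul _ ha₁ _
    · rw [mul_snd_snd, hWV, zero_add]
      exact hJmul _ ha₄ _
  · rintro a ⟨ha₁, -, -, ha₄⟩ t
    refine ⟨?_, trivial, trivial, ?_⟩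
    · rw [mul_fst_fst, hVW, add_zero]
      exact hImul' _ ha₁ _
    · rw [mul_snd_snd, hWV, zero_add]
      exact hJmul' _ ha₄ _

/-- For `r ∉ I` and `s ∉ J`, the product `((r,0),(0,0)) x ((0,0),(0,s))` has zero diagonal
for every `x`, whatever the context products are. -/
theorem not_isPrimeIdealSet_rect_univ {I : Set R} {J : Set S} (hI0 : (0 : R) ∈ I)
    (hJ0 : (0 : S) ∈ J) (hI : I ≠ Set.univ) (hJ : J ≠ Set.univ) :
    ¬ IsPrimeIdealSet (M.rect I Set.univ Set.univ J) := by
  rintro ⟨-, -, hprime⟩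
  obtain ⟨r, hr⟩ := Set.ne_univ_iff_exists_notMem I |>.mp hI
  obtain ⟨s, hs⟩ := Set.ne_univ_iff_exists_notMem J |>.mp hJ
  have hab : ∀ x, M.mat r 0 0 0 * x * M.mat 0 0 0 s ∈ M.rect I Set.univ Set.univ J := by
    intro x
    refine ⟨?_, trivial, trivial, ?_⟩
    · rw [mul_fst_fst]
      simpa only [mat, mul_zero, M.mulVW_zero, add_zero] using hI0
    · rw [mul_snd_snd, mul_snd_snd]
      simpa only [mat, M.zero_mulWV, M.mulWV_zero, zero_mul, add_zero] using hJ0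
  rcases hprime _ _ hab with ⟨h, -⟩ | ⟨-, -, -, h⟩
  exacts [hr h, hs h]

theorem ofIdeals_mulVW_eq_zero {A : Type*} [CommRing A] {I J : Ideal A} (hIJ : I * J = ⊥)
    (v : I) (w : J) : (ofIdeals A I J).mulVW v w = 0 := by
  show (v * w : A) = 0
  simpa [hIJ] using Ideal.mul_mem_mul v.2 w.2

theorem ofIdeals_mulWV_eq_zero {A : Type*} [CommRing A] {I J : Ideal A} (hIJ : I * J = ⊥)
    (w : J) (v : I) : (ofIdeals A I J).mulWV w v = 0 := by
  show (w * v : A) = 0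
  simpa [mul_comm J, hIJ] using Ideal.mul_mem_mul w.2 v.2

end MoritaContext

theorem Ideal.isIdealSet {A : Type*} [CommRing A] (I : Ideal A) : IsIdealSet (I : Set A) :=
  ⟨I.zero_mem, fun _ ha _ hb => I.add_mem ha hb, fun _ ha => I.neg_mem ha,
    fun _ ha t => I.mul_mem_right t ha, fun _ ha t => I.mul_mem_left t ha⟩

theorem Ideal.IsPrime.isPrimeIdealSet {A : Type*} [CommRing A] {I : Ideal A} (hI : I.IsPrime) :
    IsPrimeIdealSet (I : Set A) := by
  refine ⟨I.isIdealSet, by simpa using hI.ne_top, fun a b hab => hI.mem_or_mem ?_⟩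
  simpa using hab 1

theorem ZMod.span_natCast_eq_ker_castHom {n p : ℕ} (h : p ∣ n) :
    Ideal.span {(p : ZMod n)} = RingHom.ker (ZMod.castHom h (ZMod p)) := by
  have hsurj : Function.Surjective (Int.castRingHom (ZMod n)) := ZMod.intCast_surjective
  calc Ideal.span {(p : ZMod n)}
      = (Ideal.span {(p : ℤ)}).map (Int.castRingHom (ZMod n)) := by simp [Ideal.map_span]
    _ = ((RingHom.ker (ZMod.castHom h (ZMod p))).comap (Int.castRingHom (ZMod n))).map
          (Int.castRingHom (ZMod n)) := by
        rw [RingHom.comap_ker, RingHom.ext_int ((ZMod.castHom h (ZMod p)).comp _)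
          (Int.castRingHom (ZMod p)), ZMod.ker_intCastRingHom]
    _ = RingHom.ker (ZMod.castHom h (ZMod p)) := Ideal.map_comap_of_surjective _ hsurj _

theorem ZMod.isPrime_span_natCast {n p : ℕ} (hp : p.Prime) (h : p ∣ n) :
    (Ideal.span {(p : ZMod n)}).IsPrime := by
  have := Fact.mk hp
  rw [ZMod.span_natCast_eq_ker_castHom h]
  exact RingHom.ker_isPrime _

theorem ZMod.span_two_mul_span_three_eq_bot :
    Ideal.span {(2 : ZMod 6)} * Ideal.span {(3 : ZMod 6)} = ⊥ := by
  rw [Ideal.span_singleton_mul_span_singleton, Ideal.span_singleton_eq_bot]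
  decide

/-- Example 2.8: in the Morita context `(ℤ₆, 2ℤ₆, 3ℤ₆, ℤ₆)` one has `VW = 0`,
`WV = 0`; the ideal `H = (3ℤ₆, 2ℤ₆, 3ℤ₆, 2ℤ₆)` satisfies all the conditions in
Theorem 2.7(2) but is not a prime ideal. -/
theorem stmt11 :
    (∀ (v : Ideal.span {(2 : ZMod 6)}) (w : Ideal.span {(3 : ZMod 6)}),
      M6.mulVW v w = 0) ∧
    (∀ (w : Ideal.span {(3 : ZMod 6)}) (v : Ideal.span {(2 : ZMod 6)}),
      M6.mulWV w v = 0) ∧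
    IsIdealSet H6 ∧
    IsPrimeIdealSet ((Ideal.span {(3 : ZMod 6)} : Ideal (ZMod 6)) : Set (ZMod 6)) ∧
    IsPrimeIdealSet ((Ideal.span {(2 : ZMod 6)} : Ideal (ZMod 6)) : Set (ZMod 6)) ∧
    (Set.univ : Set (Ideal.span {(2 : ZMod 6)})) =
      {v | ∀ w, M6.mulVW v w ∈ Ideal.span {(3 : ZMod 6)}} ∧
    (Set.univ : Set (Ideal.span {(2 : ZMod 6)})) =
      {v | ∀ w, M6.mulWV w v ∈ Ideal.span {(2 : ZMod 6)}} ∧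
    (Set.univ : Set (Ideal.span {(3 : ZMod 6)})) =
      {w | ∀ v, M6.mulVW v w ∈ Ideal.span {(3 : ZMod 6)}} ∧
    (Set.univ : Set (Ideal.span {(3 : ZMod 6)})) =
      {w | ∀ v, M6.mulWV w v ∈ Ideal.span {(2 : ZMod 6)}} ∧
    ¬ IsPrimeIdealSet H6 := by
  have hVW : ∀ (v : Ideal.span {(2 : ZMod 6)}) (w : Ideal.span {(3 : ZMod 6)}),
      M6.mulVW v w = 0 :=
    MoritaContext.ofIdeals_mulVW_eq_zero ZMod.span_two_mul_span_three_eq_bot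
  have hWV : ∀ (w : Ideal.span {(3 : ZMod 6)}) (v : Ideal.span {(2 : ZMod 6)}),
      M6.mulWV w v = 0 :=
    MoritaContext.ofIdeals_mulWV_eq_zero ZMod.span_two_mul_span_three_eq_bot
  have hP3 := (ZMod.isPrime_span_natCast (n := 6) Nat.prime_three (by norm_num)).isPrimeIdealSet
  have hP2 := (ZMod.isPrime_span_natCast (n := 6) Nat.prime_two (by norm_num)).isPrimeIdealSet
  simp only [Nat.cast_ofNat] at hP3 hP2
  refine ⟨hVW, hWV, M6.isIdealSet_rect_univ hP3.1 hP2.1 hVW hWV, hP3, hP2, ?_, ?_, ?_, ?_,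
    M6.not_isPrimeIdealSet_rect_univ hP3.1.1 hP2.1.1 hP3.2.1 hP2.2.1⟩ <;>
  exact (Set.eq_univ_of_forall fun _ _ => by simp [hVW, hWV]).symm
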